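/- arXiv:1811.01940 — 3 statements merged into one kernel-verified Lean document; each statement's English description precedes it below -/
import Mathlib

section
/- Given a dynamic program and a plan factorization (W0, W1), fix σ ∈ Σ. Then the refactored σ-value operator S_σ = W0 ∘ M_σ ∘ W1 has a unique fixed point g_σ in 𝒢 if and only if the σ-value operator T_σ has a unique fixed point v_σ in 𝒱. Whenever these unique fixed points exist, they are related by v_σ = M_σ(W1(g_σ)) and g_σ = W0(v_σ). -/
/-- An abstract dynamic program: state space `X`, action space `A`,
a nonempty feasible correspondence `Γ`, a set `V` of candidate value
functions, and a state-action aggregator `H`. -/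
structure DP (X A : Type*) where
  /-- the feasible correspondence -/
  Γ : X → Set A
  Γ_ne : ∀ x, (Γ x).Nonempty
  /-- the set `𝒱` of candidate value functions -/
  V : Set (X → ℝ)
  /-- the state-action aggregator -/
  H : X → A → (X → ℝ) → ℝ

namespace DP

variable {X A : Type*} (dp : DP X A)

/-- The set `F` of feasible state-action pairs, as a type. -/
abbrev FP : Type _ := {p : X × A // p.2 ∈ dp.Γ p.1}

/-- The Bellman operator `(T v)(x) = sup_{a ∈ Γ(x)} H(x, a, v)`. -/
noncomputable def T (v : X → ℝ) : X → ℝ :=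
  fun x => sSup ((fun a => dp.H x a v) '' dp.Γ x)

/-- Feasibility of a policy: `σ(x) ∈ Γ(x)` everywhere, together with the
regularity condition that `x ↦ H(x, σ(x), v)` stays in `𝒱`. -/
def Feasible (σ : X → A) : Prop :=
  (∀ x, σ x ∈ dp.Γ x) ∧ ∀ v ∈ dp.V, (fun x => dp.H x (σ x) v) ∈ dp.V

/-- `Σ`, the set of feasible policies, as a type. -/
abbrev Policy : Type _ := {σ : X → A // dp.Feasible σ}

/-- The `σ`-value operator `(T_σ v)(x) = H(x, σ(x), v)`. -/
def Tσ (σ : dp.Policy) (v : X → ℝ) : X → ℝ := fun x => dp.H x (σ.1 x) v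

/-- `σ` is a `v`-greedy policy. -/
def Greedy (v : X → ℝ) (σ : dp.Policy) : Prop :=
  ∀ x, dp.H x (σ.1 x) v = sSup ((fun a => dp.H x a v) '' dp.Γ x)

/-- The maximization operator `(M h)(x) = sup_{a ∈ Γ(x)} h(x, a)`. -/
noncomputable def M (h : dp.FP → ℝ) : X → ℝ :=
  fun x => sSup {y | ∃ (a : A) (ha : a ∈ dp.Γ x), y = h ⟨(x, a), ha⟩}

/-- The operator `(M_σ h)(x) = h(x, σ(x))`. -/
def Mσ (σ : dp.Policy) (h : dp.FP → ℝ) : X → ℝ :=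
  fun x => h ⟨(x, σ.1 x), σ.2.1 x⟩

end DP

/-- A plan factorization `(W0, W1)` for the dynamic program `dp`:
`W1 (W0 v) (x, a) = H(x, a, v)` for all `(x,a) ∈ F` and `v ∈ 𝒱`. -/
structure PF {X A : Type*} (dp : DP X A) where
  W0 : (X → ℝ) → (dp.FP → ℝ)
  W1 : (dp.FP → ℝ) → (dp.FP → ℝ)
  factorizes : ∀ v ∈ dp.V, ∀ p : dp.FP, W1 (W0 v) p = dp.H p.1.1 p.1.2 v

namespace PF

variable {X A : Type*} {dp : DP X A} (pf : PF dp)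

/-- `𝒢 := W0(𝒱)`. -/
def Gcal : Set (dp.FP → ℝ) := pf.W0 '' dp.V

/-- The refactored Bellman operator `S = W0 ∘ M ∘ W1`. -/
noncomputable def S (g : dp.FP → ℝ) : dp.FP → ℝ := pf.W0 (dp.M (pf.W1 g))

/-- The refactored `σ`-value operator `S_σ = W0 ∘ M_σ ∘ W1`. -/
def Sσ (σ : dp.Policy) (g : dp.FP → ℝ) : dp.FP → ℝ := pf.W0 (dp.Mσ σ (pf.W1 g))

/-- `σ` is a `g`-greedy policy: `M_σ (W1 g) = M (W1 g)`. -/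
def GreedyG (g : dp.FP → ℝ) (σ : dp.Policy) : Prop :=
  dp.Mσ σ (pf.W1 g) = dp.M (pf.W1 g)

end PF

/-- A self-map `A` on a set `U` of a topological space (topology `τ`) is
asymptotically stable on `U` if it maps `U` into itself, has a unique fixed
point `ū` in `U`, and `Aⁿ u → ū` for every `u ∈ U`. -/
def AsympStable {E : Type*} (τ : TopologicalSpace E) (A : E → E) (U : Set E) : Prop :=
  Set.MapsTo A U U ∧
    ∃ u ∈ U, A u = u ∧ (∀ u' ∈ U, A u' = u' → u' = u) ∧
      ∀ u₀ ∈ U, Filter.Tendsto (fun n => A^[n] u₀) Filter.atTop (@nhds E τ u)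

theorem key_lemma {X A : Type*} (dp : DP X A) (pf : PF dp) (σ : dp.Policy)
    {v : X → ℝ} (hv : v ∈ dp.V) :
    dp.Mσ σ (pf.W1 (pf.W0 v)) = dp.Tσ σ v := by
  funext x
  simpa [DP.Mσ, DP.Tσ] using pf.factorizes v hv ⟨(x, σ.1 x), σ.2.1 x⟩

theorem fix_transfer {X A : Type*} (dp : DP X A) (pf : PF dp) (σ : dp.Policy)
    {g : dp.FP → ℝ} (hg : g ∈ pf.Gcal) (hfix : pf.Sσ σ g = g) :
    dp.Mσ σ (pf.W1 g) ∈ dp.V ∧ dp.Tσ σ (dp.Mσ σ (pf.W1 g)) = dp.Mσ σ (pf.W1 g) ∧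
      pf.W0 (dp.Mσ σ (pf.W1 g)) = g := by
  obtain ⟨u, hu, rfl⟩ := hg
  have h1 : dp.Mσ σ (pf.W1 (pf.W0 u)) = dp.Tσ σ u := key_lemma dp pf σ hu
  have hmem : dp.Mσ σ (pf.W1 (pf.W0 u)) ∈ dp.V := by
    rw [h1]; exact σ.2.2 u hu
  refine ⟨hmem, ?_, hfix⟩
  have : dp.Tσ σ (dp.Mσ σ (pf.W1 (pf.W0 u)))
      = dp.Mσ σ (pf.W1 (pf.W0 (dp.Mσ σ (pf.W1 (pf.W0 u))))) :=
    (key_lemma dp pf σ hmem).symm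
  have hfix' : pf.W0 (dp.Mσ σ (pf.W1 (pf.W0 u))) = pf.W0 u := hfix
  rw [this, hfix']

/-- Proposition 3: `S_σ` has a unique fixed point `g_σ` in `𝒢` iff `T_σ` has a
unique fixed point `v_σ` in `𝒱`; whenever these exist they are related by
`v_σ = M_σ (W1 g_σ)` and `g_σ = W0 v_σ`. -/
theorem stmt_5 {X A : Type*} [Nonempty X] [Nonempty A]
    (dp : DP X A) (pf : PF dp) (σ : dp.Policy) :
    ((∃! g, g ∈ pf.Gcal ∧ pf.Sσ σ g = g) ↔ (∃! v, v ∈ dp.V ∧ dp.Tσ σ v = v)) ∧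
    (∀ (g : dp.FP → ℝ) (v : X → ℝ),
      g ∈ pf.Gcal → pf.Sσ σ g = g → (∀ g' ∈ pf.Gcal, pf.Sσ σ g' = g' → g' = g) →
      v ∈ dp.V → dp.Tσ σ v = v → (∀ v' ∈ dp.V, dp.Tσ σ v' = v' → v' = v) →
      v = dp.Mσ σ (pf.W1 g) ∧ g = pf.W0 v) := by
  constructor
  · constructor
    · rintro ⟨g, ⟨hgG, hgfix⟩, hguniq⟩
      obtain ⟨hvmem, hvfix, hW0⟩ := fix_transfer dp pf σ hgG hgfix
      refine ⟨dp.Mσ σ (pf.W1 g), ⟨hvmem, hvfix⟩, ?_⟩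
      rintro v' ⟨hv', hv'fix⟩
      have hG : pf.W0 v' ∈ pf.Gcal := ⟨v', hv', rfl⟩
      have hSfix : pf.Sσ σ (pf.W0 v') = pf.W0 v' := by
        show pf.W0 (dp.Mσ σ (pf.W1 (pf.W0 v'))) = pf.W0 v'
        rw [key_lemma dp pf σ hv', hv'fix]
      have := hguniq _ ⟨hG, hSfix⟩
      calc v' = dp.Tσ σ v' := hv'fix.symm
        _ = dp.Mσ σ (pf.W1 (pf.W0 v')) := (key_lemma dp pf σ hv').symm
        _ = dp.Mσ σ (pf.W1 g) := by rw [this]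
    · rintro ⟨v, ⟨hvV, hvfix⟩, hvuniq⟩
      refine ⟨pf.W0 v, ⟨⟨v, hvV, rfl⟩, ?_⟩, ?_⟩
      · show pf.W0 (dp.Mσ σ (pf.W1 (pf.W0 v))) = pf.W0 v
        rw [key_lemma dp pf σ hvV, hvfix]
      · rintro g' ⟨hg'G, hg'fix⟩
        obtain ⟨hwmem, hwfix, hW0⟩ := fix_transfer dp pf σ hg'G hg'fix
        have := hvuniq _ ⟨hwmem, hwfix⟩
        rw [← hW0, this]
  · intro g v hgG hgfix hguniq hvV hvfix hvuniq
    obtain ⟨hwmem, hwfix, hW0⟩ := fix_transfer dp pf σ hgG hgfix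
    have hv : dp.Mσ σ (pf.W1 g) = v := hvuniq _ hwmem hwfix
    exact ⟨hv.symm, by rw [← hv, hW0]⟩
end

section
/- Let (W0, W1) be a plan factorization for a dynamic program in which a v-greedy policy exists in Σ for every v ∈ 𝒱. Fix a sequence of positive integers {m_k}_{k≥0}. Suppose v_0 ∈ 𝒱 and g_0 = W0(v_0). Then sequences {σ_k} and {Σ_k} satisfy the standard optimistic policy iteration recursion (Σ_k is the set of v_k-greedy policies, σ_k ∈ Σ_k, and v_{k+1} = T_{σ_k}^{m_k} v_k) if and only if they satisfy the refactored optimistic policy iteration recursion (Σ_k is the set of g_k-greedy policies, σ_k ∈ Σ_k, and g_{k+1} = S_{σ_k}^{m_k} g_k). Moreover, the generated sequences satisfy g_k = W0(v_k) for all k ∈ ℕ. -/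
/-- Theorem 4: if a `v`-greedy policy exists for every `v ∈ 𝒱`, `v₀ ∈ 𝒱` and
`g₀ = W0 v₀`, then standard and refactored optimistic policy iteration generate
the same greedy-policy sets at every stage, and `g_k = W0 v_k` for all `k`. -/
theorem stmt_10 {X A : Type*} [Nonempty X] [Nonempty A]
    (dp : DP X A) (pf : PF dp)
    (hgreedy : ∀ v ∈ dp.V, ∃ σ : dp.Policy, dp.Greedy v σ)
    -- the sequence of positive integers `{m_k}`
    (m : ℕ → ℕ) (hm : ∀ k, 1 ≤ m k)
    -- the generated sequences
    (σ : ℕ → dp.Policy) (v : ℕ → (X → ℝ)) (g : ℕ → (dp.FP → ℝ))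
    (hv0 : v 0 ∈ dp.V) (hg0 : g 0 = pf.W0 (v 0))
    (hvrec : ∀ k, v (k + 1) = (dp.Tσ (σ k))^[m k] (v k))
    (hgrec : ∀ k, g (k + 1) = (pf.Sσ (σ k))^[m k] (g k)) :
    -- the `v_k`-greedy and `g_k`-greedy policy sets coincide at every stage,
    -- so `{σ_k}` satisfies the standard recursion iff it satisfies the
    -- refactored recursion
    (∀ (k : ℕ) (σ' : dp.Policy), dp.Greedy (v k) σ' ↔ pf.GreedyG (g k) σ') ∧
    -- moreover `g_k = W0 v_k` for all `k`
    (∀ k, g k = pf.W0 (v k)) := by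
  -- basic facts
  have hTV : ∀ (s : dp.Policy), ∀ w ∈ dp.V, dp.Tσ s w ∈ dp.V := fun s w hw =>
    s.2.2 w hw
  have hSW : ∀ (s : dp.Policy), ∀ w ∈ dp.V, pf.Sσ s (pf.W0 w) = pf.W0 (dp.Tσ s w) := by
    intro s w hw
    unfold PF.Sσ
    have h : dp.Mσ s (pf.W1 (pf.W0 w)) = dp.Tσ s w := by
      funext x
      exact pf.factorizes w hw ⟨(x, s.1 x), s.2.1 x⟩
    rw [h]
  have hiter : ∀ (s : dp.Policy) (n : ℕ), ∀ w ∈ dp.V,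
      (dp.Tσ s)^[n] w ∈ dp.V ∧ (pf.Sσ s)^[n] (pf.W0 w) = pf.W0 ((dp.Tσ s)^[n] w) := by
    intro s n
    induction n with
    | zero => intro w hw; exact ⟨hw, rfl⟩
    | succ n ih =>
      intro w hw
      obtain ⟨h1, h2⟩ := ih w hw
      rw [Function.iterate_succ_apply', Function.iterate_succ_apply', h2]
      exact ⟨hTV s _ h1, hSW s _ h1⟩
  -- v k ∈ V and g k = W0 (v k) for all k
  have hmain : ∀ k, v k ∈ dp.V ∧ g k = pf.W0 (v k) := by
    intro k
    induction k with
    | zero => exact ⟨hv0, hg0⟩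
    | succ k ih =>
      obtain ⟨h1, h2⟩ := ih
      rw [hvrec k, hgrec k, h2]
      obtain ⟨h3, h4⟩ := hiter (σ k) (m k) (v k) h1
      exact ⟨h3, h4⟩
  refine ⟨fun k σ' => ?_, fun k => (hmain k).2⟩
  obtain ⟨hkV, hkg⟩ := hmain k
  rw [hkg]
  constructor
  · intro hG
    funext x
    simp only [DP.Mσ, DP.M]
    rw [pf.factorizes _ hkV ⟨(x, σ'.1 x), σ'.2.1 x⟩, hG x]
    congr 1
    ext y
    constructor
    · rintro ⟨a, ha, rfl⟩
      exact ⟨a, ha, (pf.factorizes _ hkV ⟨(x, a), ha⟩).symm⟩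
    · rintro ⟨a, ha, rfl⟩
      exact ⟨a, ha, (pf.factorizes _ hkV ⟨(x, a), ha⟩).symm⟩
  · intro hG x
    have := congrFun hG x
    simp only [DP.Mσ, DP.M] at this
    rw [pf.factorizes _ hkV ⟨(x, σ'.1 x), σ'.2.1 x⟩] at this
    rw [this]
    congr 1
    ext y
    constructor
    · rintro ⟨a, ha, rfl⟩
      exact ⟨a, ha, (pf.factorizes _ hkV ⟨(x, a), ha⟩).symm⟩
    · rintro ⟨a, ha, rfl⟩
      exact ⟨a, ha, (pf.factorizes _ hkV ⟨(x, a), ha⟩).symm⟩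
end

section
/- In the two-state risk-sensitive example with β > 1 and γ > 0, define v* : {1,2} → ℝ by v*(1) = 1/(1−β) and v*(2) = (2−β)/(1−β), and g* : {0,1} → ℝ by g*(0) = exp(−γβ/(1−β)) and g*(1) = exp(−γ/(1−β)). Then: (i) v*(x) equals the pointwise maximum over i ∈ {1,2,3,4} of the σ_i-value functions v_{σ_i}(x), and g*(a) equals the pointwise maximum over i of the refactored σ_i-value functions g_{σ_i}(a); (ii) S g* = g*; but (iii) (T v*)(1) = (2β − β²)/(1−β) ≠ v*(1), so T v* ≠ v*. -/
/- Two-state risk-sensitive example: states `{1, 2}` are coded by `Fin 2`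
(index `x` codes state `x + 1`), actions `{0, 1}` by `Fin 2` (index = action).
Choosing action `a` in state `x` yields reward `x - a` and moves the state
deterministically to `a + 1` (coded by index `a`).  The aggregator is
`H(x, a, v) = x - a - (β/γ) log (exp (-γ v(a+1)))`. -/

/-- The `σ`-value equation `v(x) = x - σ(x) - (β/γ) log (exp (-γ v(σ(x)+1)))`. -/
def sigEq (β γ : ℝ) (σ : Fin 2 → Fin 2) (v : Fin 2 → ℝ) : Prop :=
  ∀ x : Fin 2,
    v x = ((x : ℕ) : ℝ) + 1 - ((σ x : ℕ) : ℝ)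
      - (β / γ) * Real.log (Real.exp (-γ * v (σ x)))

/-- The refactored `σ`-value equation
`g(a) = exp (-γ [(a+1) - σ(a+1) - (β/γ) log g(σ(a+1))])`. -/
noncomputable def refEq (β γ : ℝ) (σ : Fin 2 → Fin 2) (g : Fin 2 → ℝ) : Prop :=
  ∀ a : Fin 2,
    g a = Real.exp (-γ * (((a : ℕ) : ℝ) + 1 - ((σ a : ℕ) : ℝ)
      - (β / γ) * Real.log (g (σ a))))

/-- The Bellman operator `(TOp v)(x) = max {x + β v(1), x - 1 + β v(2)}`. -/
noncomputable def TOp (β : ℝ) (v : Fin 2 → ℝ) : Fin 2 → ℝ :=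
  fun x => max (((x : ℕ) : ℝ) + 1 + β * v 0) (((x : ℕ) : ℝ) + 1 - 1 + β * v 1)

/-- The refactored Bellman operator
`(S g)(a) = exp (-γ max_{a' ∈ {0,1}} {(a+1) - a' - (β/γ) log g(a')})`. -/
noncomputable def Sop (β γ : ℝ) (g : Fin 2 → ℝ) : Fin 2 → ℝ :=
  fun a => Real.exp (-γ * max
    (((a : ℕ) : ℝ) + 1 - 0 - (β / γ) * Real.log (g 0))
    (((a : ℕ) : ℝ) + 1 - 1 - (β / γ) * Real.log (g 1)))

/- Everything linearizes. Since `log ∘ exp = id`, a `σ`-value function solves the linear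
system `v x = (x + 1 - σ x) + β v(σ x)`; a positive `g` solves the refactored equation exactly
when `g = exp (-γ v)` for a `σ`-value function `v`; and `S (exp (-γ v)) = exp (-γ T v)`.
Solving the four linear systems, for `β > 1` one finds `v₃ ≤ v₂ ≤ v₁` and `v₃ ≤ v₄ ≤ v₁`.
So `v* = v₁` is the largest value function, whereas `g* = exp (-γ v₃)` comes from the
smallest one, `exp (-γ ·)` being decreasing. It is `v₃`, not `v₁`, that is a fixed point
of `T`: hence `S g* = g*` but `T v* ≠ v*`. -/

open Real

namespace TwoStateExample

variable {β γ : ℝ} {σ : Fin 2 → Fin 2} {v : Fin 2 → ℝ}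

theorem sigEq_iff (hγ : γ ≠ 0) :
    sigEq β γ σ v ↔ ∀ x, v x = (x : ℕ) + 1 - (σ x : ℕ) + β * v (σ x) := by
  refine forall_congr' fun x => ?_
  rw [log_exp, show β / γ * (-γ * v (σ x)) = -(β * v (σ x)) by field_simp, sub_neg_eq_add]

theorem refEq_exp_iff (hγ : γ ≠ 0) :
    refEq β γ σ (fun a => exp (-γ * v a)) ↔ sigEq β γ σ v :=
  forall_congr' fun a => by rw [exp_eq_exp, mul_right_inj' (neg_ne_zero.2 hγ), log_exp]

theorem exists_eq_exp_neg_mul (hγ : γ ≠ 0) {g : Fin 2 → ℝ} (hg : ∀ a, 0 < g a) :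
    ∃ v : Fin 2 → ℝ, g = fun a => exp (-γ * v a) :=
  ⟨fun a => -log (g a) / γ, funext fun a => by
    rw [show -γ * (-log (g a) / γ) = log (g a) by field_simp, exp_log (hg a)]⟩

theorem Sop_exp (hγ : γ ≠ 0) (v : Fin 2 → ℝ) :
    Sop β γ (fun a => exp (-γ * v a)) = fun a => exp (-γ * TOp β v a) := by
  funext a
  have hβγ (t : ℝ) : β / γ * (-γ * t) = -(β * t) := by field_simp
  simp only [Sop, TOp, log_exp, hβγ, sub_neg_eq_add, sub_zero]

theorem sigEq_iff_of_fin_two (hγ : γ ≠ 0) {s₀ s₁ : Fin 2} :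
    sigEq β γ ![s₀, s₁] v ↔ v 0 = 1 - s₀ + β * v s₀ ∧ v 1 = 2 - s₁ + β * v s₁ := by
  rw [sigEq_iff hγ, Fin.forall_fin_two]
  norm_num

-- `vᵢ β` is the value function of the policy `σᵢ`.
noncomputable def v₁ (β : ℝ) : Fin 2 → ℝ := ![1 / (1 - β), (2 - β) / (1 - β)]
noncomputable def v₂ (β : ℝ) : Fin 2 → ℝ := ![1 / (1 - β), 1 / (1 - β)]
noncomputable def v₃ (β : ℝ) : Fin 2 → ℝ := ![β / (1 - β), 1 / (1 - β)]
noncomputable def v₄ (β : ℝ) : Fin 2 → ℝ := ![2 * β / (1 - β ^ 2), 2 / (1 - β ^ 2)]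

theorem eq_v₁_of_sigEq (hγ : γ ≠ 0) (hβ : β ≠ 1) (h : sigEq β γ ![0, 0] v) : v = v₁ β := by
  obtain ⟨h0, h1⟩ := (sigEq_iff_of_fin_two hγ).1 h
  norm_num at h0 h1
  have hβ' : 1 - β ≠ 0 := sub_ne_zero.2 hβ.symm
  rw [funext_iff, Fin.forall_fin_two]
  exact ⟨eq_div_of_mul_eq hβ' (by linear_combination h0),
    eq_div_of_mul_eq hβ' (by linear_combination (1 - β) * h1 + β * h0)⟩

theorem eq_v₂_of_sigEq (hγ : γ ≠ 0) (hβ : β ≠ 1) (h : sigEq β γ ![0, 1] v) : v = v₂ β := by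
  obtain ⟨h0, h1⟩ := (sigEq_iff_of_fin_two hγ).1 h
  norm_num at h0 h1
  have hβ' : 1 - β ≠ 0 := sub_ne_zero.2 hβ.symm
  rw [funext_iff, Fin.forall_fin_two]
  exact ⟨eq_div_of_mul_eq hβ' (by linear_combination h0),
    eq_div_of_mul_eq hβ' (by linear_combination h1)⟩

theorem eq_v₃_of_sigEq (hγ : γ ≠ 0) (hβ : β ≠ 1) (h : sigEq β γ ![1, 1] v) : v = v₃ β := by
  obtain ⟨h0, h1⟩ := (sigEq_iff_of_fin_two hγ).1 h
  norm_num at h0 h1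
  have hβ' : 1 - β ≠ 0 := sub_ne_zero.2 hβ.symm
  rw [funext_iff, Fin.forall_fin_two]
  exact ⟨eq_div_of_mul_eq hβ' (by linear_combination (1 - β) * h0 + β * h1),
    eq_div_of_mul_eq hβ' (by linear_combination h1)⟩

theorem eq_v₄_of_sigEq (hγ : γ ≠ 0) (hβ : β ^ 2 ≠ 1) (h : sigEq β γ ![1, 0] v) : v = v₄ β := by
  obtain ⟨h0, h1⟩ := (sigEq_iff_of_fin_two hγ).1 h
  norm_num at h0 h1
  have hβ' : 1 - β ^ 2 ≠ 0 := sub_ne_zero.2 hβ.symm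
  rw [funext_iff, Fin.forall_fin_two]
  exact ⟨eq_div_of_mul_eq hβ' (by linear_combination h0 + β * h1),
    eq_div_of_mul_eq hβ' (by linear_combination h1 + β * h0)⟩

theorem v₂_le_v₁ (hβ : 1 < β) : v₂ β ≤ v₁ β := by
  have hβ' : 1 - β ≠ 0 := by linarith
  rw [Pi.le_def, Fin.forall_fin_two]
  refine ⟨le_rfl, sub_nonneg.1 ?_⟩
  rw [show v₁ β 1 - v₂ β 1 = 1 by simp only [v₁, v₂, Matrix.cons_val]; field_simp; ring]
  exact zero_le_one

theorem v₃_le_v₂ (hβ : 1 < β) : v₃ β ≤ v₂ β := by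
  have hβ' : 1 - β ≠ 0 := by linarith
  rw [Pi.le_def, Fin.forall_fin_two]
  refine ⟨sub_nonneg.1 ?_, le_rfl⟩
  rw [show v₂ β 0 - v₃ β 0 = 1 by simp only [v₂, v₃, Matrix.cons_val]; field_simp]
  exact zero_le_one

theorem v₃_le_v₄ (hβ : 1 < β) : v₃ β ≤ v₄ β := by
  have hβ' : 1 - β ≠ 0 := by linarith
  have hβ'' : 1 - β ^ 2 ≠ 0 := by nlinarith
  rw [Pi.le_def, Fin.forall_fin_two]
  refine ⟨sub_nonneg.1 ?_, sub_nonneg.1 ?_⟩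
  · rw [show v₄ β 0 - v₃ β 0 = β / (1 + β) by simp only [v₃, v₄, Matrix.cons_val]; field_simp; ring]
    positivity
  · rw [show v₄ β 1 - v₃ β 1 = 1 / (1 + β) by simp only [v₃, v₄, Matrix.cons_val]; field_simp; ring]
    positivity

theorem v₄_le_v₁ (hβ : 1 < β) : v₄ β ≤ v₁ β := by
  have hβ' : 1 - β ≠ 0 := by linarith
  have hβ'' : 1 - β ^ 2 ≠ 0 := by nlinarith
  rw [Pi.le_def, Fin.forall_fin_two]
  refine ⟨sub_nonneg.1 ?_, sub_nonneg.1 ?_⟩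
  · rw [show v₁ β 0 - v₄ β 0 = 1 / (1 + β) by simp only [v₁, v₄, Matrix.cons_val]; field_simp; ring]
    positivity
  · rw [show v₁ β 1 - v₄ β 1 = β / (1 + β) by simp only [v₁, v₄, Matrix.cons_val]; field_simp; ring]
    positivity

theorem TOp_v₃ (hβ : 1 < β) : TOp β (v₃ β) = v₃ β := by
  have hβ' : 1 - β ≠ 0 := by linarith
  funext x
  rw [TOp, max_eq_right (sub_nonneg.1 ?_)]
  · fin_cases x <;> simp only [v₃, Matrix.cons_val] <;> push_cast <;> field_simp <;> ring
  · rw [show (x : ℝ) + 1 - 1 + β * v₃ β 1 - ((x : ℝ) + 1 + β * v₃ β 0) = β - 1 by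
      simp only [v₃, Matrix.cons_val]; field_simp; ring]
    linarith

theorem TOp_v₁_zero (hβ : 1 < β) : TOp β (v₁ β) 0 = (2 * β - β ^ 2) / (1 - β) := by
  have hβ' : 1 - β ≠ 0 := by linarith
  rw [TOp, max_eq_right (sub_nonneg.1 ?_)]
  · simp only [v₁, Matrix.cons_val, Fin.val_zero, Nat.cast_zero]; field_simp; ring
  · rw [show ((0 : Fin 2) : ℝ) + 1 - 1 + β * v₁ β 1 - (((0 : Fin 2) : ℝ) + 1 + β * v₁ β 0) = β - 1 by
      simp only [v₁, Matrix.cons_val]; field_simp; ring]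
    linarith

theorem TOp_v₁_zero_ne (hβ : 1 < β) : TOp β (v₁ β) 0 ≠ v₁ β 0 := by
  have hβ' : 1 - β ≠ 0 := by linarith
  rw [TOp_v₁_zero hβ]
  simp only [v₁, Matrix.cons_val]
  rw [Ne, div_left_inj' hβ']
  nlinarith

end TwoStateExample

open TwoStateExample in
/-- Counterexample 2 (β > 1): `v*` and `g*` are the pointwise maxima of the
(refactored) `σ`-value functions and `S g* = g*`, yet
`(T v*)(1) = (2β - β²)/(1-β) ≠ v*(1)`, so `T v* ≠ v*`. -/
theorem stmt_18 (β γ : ℝ) (hβ1 : 1 < β) (hγ : 0 < γ)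
    (vstar : Fin 2 → ℝ)
    (hvstar : vstar = ![1 / (1 - β), (2 - β) / (1 - β)])
    (gstar : Fin 2 → ℝ)
    (hgstar : gstar = ![Real.exp (-γ * β / (1 - β)), Real.exp (-γ / (1 - β))]) :
    -- (i)
    (∀ v1 v2 v3 v4 : Fin 2 → ℝ,
      sigEq β γ ![0, 0] v1 → sigEq β γ ![0, 1] v2 →
      sigEq β γ ![1, 1] v3 → sigEq β γ ![1, 0] v4 →
      ∀ x, vstar x = max (max (v1 x) (v2 x)) (max (v3 x) (v4 x))) ∧
    (∀ g1 g2 g3 g4 : Fin 2 → ℝ,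
      (∀ a, 0 < g1 a) → refEq β γ ![0, 0] g1 →
      (∀ a, 0 < g2 a) → refEq β γ ![0, 1] g2 →
      (∀ a, 0 < g3 a) → refEq β γ ![1, 1] g3 →
      (∀ a, 0 < g4 a) → refEq β γ ![1, 0] g4 →
      ∀ a, gstar a = max (max (g1 a) (g2 a)) (max (g3 a) (g4 a))) ∧
    -- (ii)
    Sop β γ gstar = gstar ∧
    -- (iii)
    (TOp β vstar 0 = (2 * β - β ^ 2) / (1 - β) ∧
      TOp β vstar 0 ≠ vstar 0 ∧ TOp β vstar ≠ vstar) := by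
  have hγ0 : γ ≠ 0 := hγ.ne'
  have hβ : β ≠ 1 := hβ1.ne'
  have hβ2 : β ^ 2 ≠ 1 := by nlinarith
  obtain rfl : vstar = v₁ β := hvstar
  obtain rfl : gstar = fun a => exp (-γ * v₃ β a) := by
    rw [hgstar, funext_iff, Fin.forall_fin_two]
    simp only [v₃, Matrix.cons_val]
    constructor <;> ring_nf
  have hanti : Antitone fun t => exp (-γ * t) := fun s t hst => exp_le_exp.2 (by nlinarith)
  refine ⟨?_, ?_, by rw [Sop_exp hγ0, TOp_v₃ hβ1], TOp_v₁_zero hβ1, TOp_v₁_zero_ne hβ1,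
    fun h => TOp_v₁_zero_ne hβ1 (congrFun h 0)⟩
  · intro v1 v2 v3 v4 h1 h2 h3 h4 x
    rw [eq_v₁_of_sigEq hγ0 hβ h1, eq_v₂_of_sigEq hγ0 hβ h2, eq_v₃_of_sigEq hγ0 hβ h3,
      eq_v₄_of_sigEq hγ0 hβ2 h4, max_eq_left (v₂_le_v₁ hβ1 x), max_eq_right (v₃_le_v₄ hβ1 x),
      max_eq_left (v₄_le_v₁ hβ1 x)]
  · intro g1 g2 g3 g4 hg1 h1 hg2 h2 hg3 h3 hg4 h4 a
    obtain ⟨w1, rfl⟩ := exists_eq_exp_neg_mul hγ0 hg1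
    obtain ⟨w2, rfl⟩ := exists_eq_exp_neg_mul hγ0 hg2
    obtain ⟨w3, rfl⟩ := exists_eq_exp_neg_mul hγ0 hg3
    obtain ⟨w4, rfl⟩ := exists_eq_exp_neg_mul hγ0 hg4
    rw [refEq_exp_iff hγ0] at h1 h2 h3 h4
    rw [eq_v₁_of_sigEq hγ0 hβ h1, eq_v₂_of_sigEq hγ0 hβ h2, eq_v₃_of_sigEq hγ0 hβ h3,
      eq_v₄_of_sigEq hγ0 hβ2 h4, max_eq_right (hanti (v₂_le_v₁ hβ1 a)),
      max_eq_left (hanti (v₃_le_v₄ hβ1 a)), max_eq_right (hanti (v₃_le_v₂ hβ1 a))]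
end
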